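/- Let (u_{mn}) be a double sequence of real numbers that is Pringsheim convergent to ℓ and satisfies m(u_{mn} − u_{m−1,n}) ≥ −M and n(u_{mn} − u_{m,n−1}) ≥ −M for some M > 0 and all sufficiently large m, n. Then the Cesàro (C,1,1) means σ_{mn} = (1/((m+1)(n+1))) Σ_{i=0}^m Σ_{j=0}^n u_{ij} converge to ℓ in Pringsheim's sense, and conversely, if (σ_{mn}) is Pringsheim convergent to ℓ and the above one-sided Landau conditions hold, then (u_{mn}) is Pringsheim convergent to ℓ. -/

import Mathlib

/-!
The Abelian half is the usual Cesàro argument: only the first few rows and columns of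
`u - ℓ` are not small, and they carry a vanishing proportion of the mean.

The Tauberian half compares `u` with its averages over boxes `(a, a + k] × (b, b + k']`
whose sides are a fixed fraction `≈ 1/r` of `a` and `b`. The sum over such a box is an
alternating sum of four partial sums `(p + 1)(q + 1) σ_{pq}`, so its mean is `ℓ` up to
`O(r² ε')` once `σ` is `ε'`-close to `ℓ`. The one-sided Landau condition says that `u` drops
by at most `O(C / r)` across the box, so the value at the lower corner is at most the box mean
plus `O(C / r)`, and the value at the upper corner at least the box mean minus `O(C / r)`.
-/

open Finset

def PringsheimLimit (u : ℕ → ℕ → ℝ) (ℓ : ℝ) : Prop :=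
  ∀ ε > (0 : ℝ), ∃ n₀ : ℕ, ∀ m n : ℕ, n₀ ≤ m → n₀ ≤ n → |u m n - ℓ| < ε

def OneSidedLandau (u : ℕ → ℕ → ℝ) (C : ℝ) (n₁ : ℕ) : Prop :=
  ∀ m n : ℕ, n₁ ≤ m → n₁ ≤ n →
    (m : ℝ) * (u m n - u (m - 1) n) ≥ -C ∧ (n : ℝ) * (u m n - u m (n - 1)) ≥ -C

def doubleSum {M : Type*} [AddCommMonoid M] (u : ℕ → ℕ → M) (m n : ℕ) : M :=
  ∑ i ∈ range (m + 1), ∑ j ∈ range (n + 1), u i j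

noncomputable def cesaroMean (u : ℕ → ℕ → ℝ) (m n : ℕ) : ℝ :=
  doubleSum u m n / (((m : ℝ) + 1) * ((n : ℝ) + 1))

lemma sum_Ioc_eq_sub_sum_range {M : Type*} [AddCommGroup M] (f : ℕ → M) {a b : ℕ}
    (h : a ≤ b) : ∑ i ∈ Ioc a b, f i = ∑ i ∈ range (b + 1), f i - ∑ i ∈ range (a + 1), f i := by
  rw [← Ico_add_one_add_one_eq_Ioc, sum_Ico_eq_sub _ (by omega)]

lemma sum_Ioc_product_Ioc_eq_doubleSum {M : Type*} [AddCommGroup M] (u : ℕ → ℕ → M)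
    {a A b B : ℕ} (ha : a ≤ A) (hb : b ≤ B) :
    ∑ p ∈ Ioc a A ×ˢ Ioc b B, u p.1 p.2 =
      doubleSum u A B - doubleSum u a B - doubleSum u A b + doubleSum u a b := by
  simp only [sum_product, doubleSum, sum_Ioc_eq_sub_sum_range _ hb, sum_sub_distrib,
    sum_Ioc_eq_sub_sum_range _ ha]
  abel

lemma mul_cesaroMean (u : ℕ → ℕ → ℝ) (m n : ℕ) :
    ((m : ℝ) + 1) * ((n : ℝ) + 1) * cesaroMean u m n = doubleSum u m n := by
  rw [cesaroMean]
  field_simp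

lemma cesaroMean_sub_const (u : ℕ → ℕ → ℝ) (ℓ : ℝ) (m n : ℕ) :
    cesaroMean (fun i j => u i j - ℓ) m n = cesaroMean u m n - ℓ := by
  simp only [cesaroMean, doubleSum, sum_sub_distrib, sum_const, card_range, nsmul_eq_mul]
  field_simp
  push_cast
  ring

lemma sum_range_ite_lt_le (s : ℕ) (N : ℕ) {D : ℝ} (hD : 0 ≤ D) :
    ∑ i ∈ range s, (if i < N then D else 0) ≤ N * D := by
  rw [← sum_filter]
  calc ∑ _i ∈ (range s).filter (· < N), D ≤ ∑ _i ∈ range N, D :=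
        sum_le_sum_of_subset_of_nonneg (fun i hi => by simp_all) (fun _ _ _ => hD)
    _ = N * D := by simp

lemma abs_cesaroMean_le {v : ℕ → ℕ → ℝ} {D ε : ℝ} {N : ℕ} (hD : ∀ i j, |v i j| ≤ D)
    (hε : ∀ i j, N ≤ i → N ≤ j → |v i j| ≤ ε) (m n : ℕ) :
    |cesaroMean v m n| ≤ ε + N * D / (m + 1) + N * D / (n + 1) := by
  have hD0 : 0 ≤ D := (abs_nonneg _).trans (hD 0 0)
  have hε0 : 0 ≤ ε := (abs_nonneg _).trans (hε N N le_rfl le_rfl)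
  -- only the first `N` rows and the first `N` columns escape the bound `ε`
  have hpoint : ∀ i j, |v i j| ≤ ε + ((if i < N then D else 0) + (if j < N then D else 0)) := by
    intro i j
    split_ifs with hi hj hj
    · linarith [hD i j]
    · linarith [hD i j]
    · linarith [hD i j]
    · linarith [hε i j (not_lt.mp hi) (not_lt.mp hj)]
  have hsum :
      |doubleSum v m n| ≤ (m + 1) * (n + 1) * ε + (n + 1) * (N * D) + (m + 1) * (N * D) :=
    calc |doubleSum v m n| ≤ ∑ i ∈ range (m + 1), ∑ j ∈ range (n + 1), |v i j| :=
          (abs_sum_le_sum_abs _ _).trans (sum_le_sum fun i _ => abs_sum_le_sum_abs _ _)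
      _ ≤ ∑ i ∈ range (m + 1), ∑ j ∈ range (n + 1),
            (ε + ((if i < N then D else 0) + (if j < N then D else 0))) := by
          gcongr with i _ j _
          exact hpoint i j
      _ = (m + 1) * (n + 1) * ε + (n + 1) * ∑ i ∈ range (m + 1), (if i < N then D else 0)
            + (m + 1) * ∑ j ∈ range (n + 1), (if j < N then D else 0) := by
          simp only [sum_add_distrib, sum_const, card_range, nsmul_eq_mul, ← mul_sum]
          push_cast
          ring
      _ ≤ _ := by gcongr <;> exact sum_range_ite_lt_le _ _ hD0
  have hmn : (0 : ℝ) < (m + 1) * (n + 1) := by positivity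
  rw [cesaroMean, abs_div, abs_of_pos hmn, div_le_iff₀ hmn]
  calc |doubleSum v m n| ≤ _ := hsum
    _ = (ε + N * D / (m + 1) + N * D / (n + 1)) * ((m + 1) * (n + 1)) := by
      field_simp

theorem PringsheimLimit.cesaroMean_of_bounded {u : ℕ → ℕ → ℝ} {ℓ B : ℝ}
    (hu : PringsheimLimit u ℓ) (hB : ∀ m n, |u m n| ≤ B) : PringsheimLimit (cesaroMean u) ℓ := by
  intro ε hε
  obtain ⟨N, hN⟩ := hu (ε / 2) (by positivity)
  obtain ⟨K, hK⟩ := exists_nat_gt (4 * N * (B + |ℓ|) / ε)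
  rw [div_lt_iff₀ hε] at hK
  have hstrip : ∀ p, K ≤ p → N * (B + |ℓ|) / ((p : ℝ) + 1) < ε / 4 := by
    intro p hp
    have : (K : ℝ) ≤ p := by exact_mod_cast hp
    rw [div_lt_iff₀ (by positivity)]
    nlinarith
  refine ⟨max N K, fun m n hm hn => ?_⟩
  have hmean := abs_cesaroMean_le (v := fun i j => u i j - ℓ) (D := B + |ℓ|)
    (fun i j => (abs_sub _ _).trans (by linarith [hB i j]))
    (fun i j hi hj => (hN i j hi hj).le) m n
  rw [cesaroMean_sub_const] at hmean
  linarith [hstrip m (le_of_max_le_right hm), hstrip n (le_of_max_le_right hn)]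

lemma sub_le_of_landau {f : ℕ → ℝ} {C : ℝ} (hC : 0 ≤ C) {a : ℕ}
    (hf : ∀ t, a < t → (t : ℝ) * (f t - f (t - 1)) ≥ -C) {i i' : ℕ} (hai : a ≤ i)
    (hii' : i ≤ i') : f i - f i' ≤ C * (i' - i) / (a + 1) := by
  induction i', hii' using Nat.le_induction with
  | base => simp
  | succ t hit ih =>
    have hstep : f t - f (t + 1) ≤ C / (a + 1) := by
      have h := hf (t + 1) (by omega)
      simp only [Nat.add_sub_cancel] at h
      push_cast at h
      calc f t - f (t + 1) ≤ C / (t + 1) := by rw [le_div_iff₀ (by positivity)]; linarith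
        _ ≤ C / (a + 1) := by gcongr; exact_mod_cast hai.trans hit
    calc f i - f (t + 1) = (f i - f t) + (f t - f (t + 1)) := by ring
      _ ≤ C * (t - i) / (a + 1) + C / (a + 1) := add_le_add ih hstep
      _ = C * ((t + 1 : ℕ) - i) / (a + 1) := by push_cast; ring

lemma OneSidedLandau.sub_le {u : ℕ → ℕ → ℝ} {C : ℝ} {n₁ : ℕ} (hL : OneSidedLandau u C n₁)
    (hC : 0 ≤ C) {a b i j i' j' k k' : ℕ} (ha : n₁ ≤ a) (hb : n₁ ≤ b)
    (hi : a ≤ i) (hii' : i ≤ i') (hi' : i' ≤ a + k)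
    (hj : b ≤ j) (hjj' : j ≤ j') (hj' : j' ≤ b + k') :
    u i j - u i' j' ≤ C * k / (a + 1) + C * k' / (b + 1) := by
  have hrow : u i j - u i j' ≤ C * (j' - j) / (b + 1) :=
    sub_le_of_landau hC (fun t ht => (hL i t (by omega) (by omega)).2) hj hjj'
  have hcol : u i j' - u i' j' ≤ C * (i' - i) / (a + 1) :=
    sub_le_of_landau (f := fun s => u s j') hC (fun t ht => (hL t j' (by omega) (by omega)).1)
      hi hii'
  have hdi : (i' : ℝ) - i ≤ k := by
    have : (i' : ℝ) ≤ i + k := by exact_mod_cast (by omega : i' ≤ i + k)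
    linarith
  have hdj : (j' : ℝ) - j ≤ k' := by
    have : (j' : ℝ) ≤ j + k' := by exact_mod_cast (by omega : j' ≤ j + k')
    linarith
  calc u i j - u i' j' = (u i j' - u i' j') + (u i j - u i j') := by ring
    _ ≤ C * (i' - i) / (a + 1) + C * (j' - j) / (b + 1) := add_le_add hcol hrow
    _ ≤ C * k / (a + 1) + C * k' / (b + 1) := by gcongr

lemma abs_sum_box_sub_le {u : ℕ → ℕ → ℝ} {ℓ ε' : ℝ} {N : ℕ}
    (hσ : ∀ p q, N ≤ p → N ≤ q → |cesaroMean u p q - ℓ| ≤ ε') {a b : ℕ} (ha : N ≤ a)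
    (hb : N ≤ b) (k k' : ℕ) :
    |∑ p ∈ Ioc a (a + k) ×ˢ Ioc b (b + k'), u p.1 p.2 - k * k' * ℓ| ≤
      ε' * ((2 * a + k + 2) * (2 * b + k' + 2)) := by
  set e : ℕ → ℕ → ℝ := fun p q => ((p : ℝ) + 1) * ((q : ℝ) + 1) * (cesaroMean u p q - ℓ)
  have he : ∀ p q, N ≤ p → N ≤ q → |e p q| ≤ ((p : ℝ) + 1) * ((q : ℝ) + 1) * ε' := by
    intro p q hp hq
    rw [abs_mul, abs_of_pos (by positivity)]
    exact mul_le_mul_of_nonneg_left (hσ p q hp hq) (by positivity)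
  have hsum : ∑ p ∈ Ioc a (a + k) ×ˢ Ioc b (b + k'), u p.1 p.2 - k * k' * ℓ =
      e (a + k) (b + k') - e a (b + k') - e (a + k) b + e a b := by
    rw [sum_Ioc_product_Ioc_eq_doubleSum _ (by omega) (by omega)]
    simp only [e, mul_sub, mul_cesaroMean]
    push_cast
    ring
  obtain ⟨h₁, h₁'⟩ := abs_le.mp (he (a + k) (b + k') (by omega) (by omega))
  obtain ⟨h₂, h₂'⟩ := abs_le.mp (he a (b + k') ha (by omega))
  obtain ⟨h₃, h₃'⟩ := abs_le.mp (he (a + k) b (by omega) hb)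
  obtain ⟨h₄, h₄'⟩ := abs_le.mp (he a b ha hb)
  have hweight : ε' * ((2 * a + k + 2) * (2 * b + k' + 2)) =
      (((a + k : ℕ) : ℝ) + 1) * (((b + k' : ℕ) : ℝ) + 1) * ε'
        + ((a : ℝ) + 1) * (((b + k' : ℕ) : ℝ) + 1) * ε'
        + (((a + k : ℕ) : ℝ) + 1) * ((b : ℝ) + 1) * ε' + ((a : ℝ) + 1) * ((b : ℝ) + 1) * ε' := by
    push_cast
    ring
  rw [hsum, hweight, abs_le]
  constructor <;> linarith

lemma OneSidedLandau.sum_box_bounds {u : ℕ → ℕ → ℝ} {C : ℝ} {N : ℕ}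
    (hL : OneSidedLandau u C N) (hC : 0 ≤ C) {a b : ℕ} (ha : N ≤ a) (hb : N ≤ b) (k k' : ℕ) :
    (k * k' : ℝ) * (u a b - (C * k / (a + 1) + C * k' / (b + 1))) ≤
        ∑ p ∈ Ioc a (a + k) ×ˢ Ioc b (b + k'), u p.1 p.2 ∧
      ∑ p ∈ Ioc a (a + k) ×ˢ Ioc b (b + k'), u p.1 p.2 ≤
        (k * k' : ℝ) * (u (a + k) (b + k') + (C * k / (a + 1) + C * k' / (b + 1))) := by
  have hcard : ((Ioc a (a + k) ×ˢ Ioc b (b + k')).card : ℝ) = k * k' := by simp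
  rw [← hcard, ← nsmul_eq_mul, ← nsmul_eq_mul]
  constructor
  · refine card_nsmul_le_sum _ _ _ fun p hp => ?_
    simp only [mem_product, mem_Ioc] at hp
    linarith [hL.sub_le hC (i := a) (j := b) (i' := p.1) (j' := p.2) (k := k) (k' := k')
      ha hb le_rfl (by omega) (by omega) le_rfl (by omega) (by omega)]
  · refine sum_le_card_nsmul _ _ _ fun p hp => ?_
    simp only [mem_product, mem_Ioc] at hp
    linarith [hL.sub_le hC (i := p.1) (j := p.2) (i' := a + k) (j' := b + k') (k := k)
      (k' := k') ha hb (by omega) (by omega) le_rfl (by omega) (by omega) le_rfl]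

lemma OneSidedLandau.box_estimate {u : ℕ → ℕ → ℝ} {C ℓ ε' : ℝ} {N : ℕ} (hL : OneSidedLandau u C N)
    (hC : 0 ≤ C) (hσ : ∀ p q, N ≤ p → N ≤ q → |cesaroMean u p q - ℓ| ≤ ε')
    {r a b k k' : ℕ} (hr : 1 ≤ r) (ha : N ≤ a) (hb : N ≤ b) (hk : 0 < k) (hk' : 0 < k')
    (hrk : r * k ≤ 2 * (a + 1)) (hkr : a + 1 ≤ 2 * (r * k))
    (hrk' : r * k' ≤ 2 * (b + 1)) (hkr' : b + 1 ≤ 2 * (r * k')) :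
    u a b ≤ ℓ + (4 * C / r + 25 * r ^ 2 * ε') ∧
      ℓ - (4 * C / r + 25 * r ^ 2 * ε') ≤ u (a + k) (b + k') := by
  set δ := C * k / (a + 1) + C * k' / (b + 1)
  have hε' : 0 ≤ ε' := (abs_nonneg _).trans (hσ N N le_rfl le_rfl)
  have hr' : (1 : ℝ) ≤ r := by exact_mod_cast hr
  have hkk : (0 : ℝ) < k * k' := by positivity
  have hδ : δ ≤ 4 * C / r := by
    have hside : ∀ {c s : ℕ}, r * s ≤ 2 * (c + 1) → C * s / (c + 1) ≤ 2 * C / r := by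
      intro c s h
      have h' : (r : ℝ) * s ≤ 2 * (c + 1) := by exact_mod_cast h
      rw [div_le_div_iff₀ (by positivity) (by positivity)]
      nlinarith
    calc δ ≤ 2 * C / r + 2 * C / r := add_le_add (hside hrk) (hside hrk')
      _ = 4 * C / r := by ring
  have hweight : ε' * ((2 * a + k + 2) * (2 * b + k' + 2)) ≤ k * k' * (25 * r ^ 2 * ε') := by
    have hside : ∀ {c s : ℕ}, c + 1 ≤ 2 * (r * s) → (2 * c + s + 2 : ℝ) ≤ 5 * (r * s) := by
      intro c s h
      have h' : (c : ℝ) + 1 ≤ 2 * (r * s) := by exact_mod_cast h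
      nlinarith [(Nat.cast_nonneg s : (0 : ℝ) ≤ s)]
    have := mul_le_mul (hside hkr) (hside hkr') (by positivity) (by positivity)
    nlinarith
  obtain ⟨hT, hT'⟩ := abs_le.mp (abs_sum_box_sub_le hσ ha hb k k')
  obtain ⟨hlow, hhigh⟩ := hL.sum_box_bounds hC ha hb k k'
  constructor
  · have : (k * k' : ℝ) * (u a b - δ - ℓ) ≤ k * k' * (25 * r ^ 2 * ε') := by nlinarith
    linarith [le_of_mul_le_mul_left this hkk]
  · have : (k * k' : ℝ) * (ℓ - u (a + k) (b + k') - δ) ≤ k * k' * (25 * r ^ 2 * ε') := by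
      nlinarith
    linarith [le_of_mul_le_mul_left this hkk]

lemma exists_box_side {r m : ℕ} (hr : 2 ≤ r) (hrm : r ≤ m) :
    ∃ k, 0 < k ∧ 2 * k ≤ m ∧ r * k ≤ m ∧ m + 1 ≤ 2 * (r * k) := by
  refine ⟨m / r, Nat.div_pos hrm (by omega), ?_, Nat.mul_div_le m r, ?_⟩
  · have : m / r ≤ m / 2 := Nat.div_le_div_left hr (by norm_num)
    omega
  · have hlt := Nat.lt_mul_div_succ m (b := r) (by omega)
    have hr_le : r ≤ r * (m / r) := Nat.le_mul_of_pos_right r (Nat.div_pos hrm (by omega))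
    rw [mul_add, mul_one] at hlt
    omega

theorem PringsheimLimit.of_cesaroMean {u : ℕ → ℕ → ℝ} {ℓ C : ℝ} {n₁ : ℕ} (hC : 0 ≤ C)
    (hL : OneSidedLandau u C n₁) (hσ : PringsheimLimit (cesaroMean u) ℓ) :
    PringsheimLimit u ℓ := by
  intro ε hε
  obtain ⟨r₀, hr₀⟩ := exists_nat_gt (8 * C / ε)
  set r := r₀ + 2
  have hr : (r₀ : ℝ) < r := by simp [r]
  have hC_r : 4 * C / r < ε / 2 := by
    rw [div_lt_iff₀ hε] at hr₀
    rw [div_lt_iff₀ (by positivity)]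
    nlinarith
  have hε' : 0 < ε / (100 * r ^ 2) := by positivity
  have herr : 4 * C / r + 25 * r ^ 2 * (ε / (100 * r ^ 2)) < ε := by
    have : 25 * (r : ℝ) ^ 2 * (ε / (100 * r ^ 2)) = ε / 4 := by
      field_simp [(by positivity : (r : ℝ) ≠ 0)]
      ring
    linarith
  obtain ⟨n₀, hn₀⟩ := hσ _ hε'
  set N := max n₁ n₀
  have hLN : OneSidedLandau u C N := fun m n hm hn =>
    hL m n (le_of_max_le_left hm) (le_of_max_le_left hn)
  have hσN : ∀ p q, N ≤ p → N ≤ q → |cesaroMean u p q - ℓ| ≤ ε / (100 * r ^ 2) :=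
    fun p q hp hq => (hn₀ p q (le_of_max_le_right hp) (le_of_max_le_right hq)).le
  refine ⟨2 * (N + r), fun m n hm hn => ?_⟩
  obtain ⟨k, hk, hkm, hrk, hkr⟩ := exists_box_side (r := r) (m := m) (by omega) (by omega)
  obtain ⟨k', hk', hkn, hrk', hkr'⟩ := exists_box_side (r := r) (m := n) (by omega) (by omega)
  have hup := (hLN.box_estimate hC hσN (r := r) (a := m) (b := n) (by omega) (by omega)
    (by omega) hk hk' (by omega) hkr (by omega) hkr').1
  have hlow := (hLN.box_estimate hC hσN (r := r) (a := m - k) (b := n - k') (by omega)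
    (by omega) (by omega) hk hk' (by omega) (by omega) (by omega) (by omega)).2
  rw [Nat.sub_add_cancel (by omega), Nat.sub_add_cancel (by omega)] at hlow
  rw [abs_sub_lt_iff]
  constructor <;> linarith

/-- Cesàro (C,1,1) specialization: under the one-sided Landau conditions, Pringsheim
convergence of a bounded double sequence implies Pringsheim convergence of its (C,1,1)
means to the same limit, and conversely Pringsheim convergence of the means implies
Pringsheim convergence of the sequence. -/
theorem stmt14 (u : ℕ → ℕ → ℝ) (ℓ : ℝ)
    (σ : ℕ → ℕ → ℝ)
    (hσ : ∀ m n : ℕ, σ m n =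
      (∑ i ∈ Finset.range (m + 1), ∑ j ∈ Finset.range (n + 1), u i j)
        / (((m : ℝ) + 1) * ((n : ℝ) + 1)))
    (M : ℝ) (hM : 0 < M)
    (hLandau : ∃ n₁ : ℕ, ∀ m n : ℕ, n₁ ≤ m → n₁ ≤ n →
      (m : ℝ) * (u m n - u (m - 1) n) ≥ -M ∧
      (n : ℝ) * (u m n - u m (n - 1)) ≥ -M) :
    (((∀ ε > (0 : ℝ), ∃ n₀ : ℕ, ∀ m n : ℕ, n₀ ≤ m → n₀ ≤ n → |u m n - ℓ| < ε) ∧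
        ∃ B > (0 : ℝ), ∀ m n : ℕ, |u m n| ≤ B) →
      (∀ ε > (0 : ℝ), ∃ n₀ : ℕ, ∀ m n : ℕ, n₀ ≤ m → n₀ ≤ n → |σ m n - ℓ| < ε)) ∧
    ((∀ ε > (0 : ℝ), ∃ n₀ : ℕ, ∀ m n : ℕ, n₀ ≤ m → n₀ ≤ n → |σ m n - ℓ| < ε) →
      (∀ ε > (0 : ℝ), ∃ n₀ : ℕ, ∀ m n : ℕ, n₀ ≤ m → n₀ ≤ n → |u m n - ℓ| < ε)) := by
  obtain ⟨n₁, hL⟩ := hLandau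
  obtain rfl : σ = cesaroMean u := funext₂ hσ
  exact ⟨fun ⟨hu, _, _, hB⟩ => PringsheimLimit.cesaroMean_of_bounded hu hB,
    fun hσ => PringsheimLimit.of_cesaroMean hM.le hL hσ⟩
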